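/- Let (g,⟨·,·⟩_g) be a finite-dimensional abelian real Lie algebra with a nondegenerate symmetric bilinear form, let A be a skew-symmetric endomorphism of g that is not nilpotent, let δ_A(g) be the double extension of g by A, and let (h,⟨·,·⟩_h) be a finite-dimensional abelian real Lie algebra with a nondegenerate symmetric bilinear form. Consider the direct product Lie algebra δ_A(g) × h with the product bilinear form. Then every skew-symmetric derivation D of δ_A(g) × h satisfies D(e) = 0. In particular, δ_A(g) × h admits no k-symplectic structure for any k ≥ 1. -/

import Mathlib

/-!
Write `D e = a e + u₀ + e₀ ē + h₀` for a skew-symmetric derivation `D`, and let `c` be the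
`ē`-coefficient of `D ē`. Skew-symmetry gives `e₀ = 0`, `a = -c`, and says that the
`ē`-coefficient of `D u` is `-⟨u, u₀⟩` for `u ∈ g`. Applying `D` to `[u, v] = ⟨A u, v⟩ e` then
forces `h₀ = 0` and, unless `u₀ = 0`, `A³ = 0`. Applying `D` to `[ē, u] = A u` shows that the
`g`-block `L` of `D` satisfies `L A - A L = c A`; for `c ≠ 0` the powers of `A` would be
eigenvectors of `X ↦ L X - X L` with the distinct eigenvalues `k c`, so `A` would be nilpotent.

Since the product form is nondegenerate, every 2-cocycle `θ` is `⟨D ·, ·⟩` for a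
skew-symmetric derivation `D`, so `θ(e, ·) = 0`: the central element `e` lies in the common
kernel of the cocycles of any would-be `k`-symplectic structure.
-/

section DoubleExtension

variable {V H : Type*} [AddCommGroup V] [Module ℝ V] [AddCommGroup H] [Module ℝ H]

/-- The Lie bracket of the product Lie algebra `δ_A(g) × h`, where `δ_A(g) = ℝe ⊕ g ⊕ ℝē`
is the double extension of the abelian quadratic Lie algebra `(g, Bv)` by the
skew-symmetric endomorphism `A`, and `h` is abelian.  An element `((x, u, x̄), h)`
represents `x e + u + x̄ ē + h`.  The nonvanishing brackets of `δ_A(g)` are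
`[ē, u] = A u` and `[u, v] = ⟨A u, v⟩ e`. -/
def deBracket (Bv : V →ₗ[ℝ] V →ₗ[ℝ] ℝ) (A : V →ₗ[ℝ] V)
    (x y : (ℝ × V × ℝ) × H) : (ℝ × V × ℝ) × H :=
  ((Bv (A x.1.2.1) y.1.2.1, x.1.2.2 • A y.1.2.1 - y.1.2.2 • A x.1.2.1, 0), 0)

/-- The product quadratic form on `δ_A(g) × h`:
`⟨x e + u + x̄ ē + h, y e + v + ȳ ē + k⟩ = x ȳ + y x̄ + ⟨u,v⟩_g + ⟨h,k⟩_h`. -/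
def deForm (Bv : V →ₗ[ℝ] V →ₗ[ℝ] ℝ) (Bh : H →ₗ[ℝ] H →ₗ[ℝ] ℝ)
    (x y : (ℝ × V × ℝ) × H) : ℝ :=
  x.1.1 * y.1.2.2 + y.1.1 * x.1.2.2 + Bv x.1.2.1 y.1.2.1 + Bh x.2 y.2

theorem mul_pow_sub_pow_mul_of_mul_sub_mul_eq_smul {K R : Type*} [CommRing K] [Ring R]
    [Algebra K R] {l a : R} {c : K} (h : l * a - a * l = c • a) (k : ℕ) :
    l * a ^ k - a ^ k * l = (k * c) • a ^ k := by
  induction k with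
  | zero => simp
  | succ k ih =>
    calc l * a ^ (k + 1) - a ^ (k + 1) * l
        = (l * a ^ k - a ^ k * l) * a + a ^ k * (l * a - a * l) := by noncomm_ring
      _ = ((k + 1 : ℕ) * c) • a ^ (k + 1) := by
        rw [ih, h, smul_mul_assoc, mul_smul_comm, ← pow_succ, ← add_smul]
        push_cast; ring_nf

theorem Module.End.isNilpotent_of_mul_sub_mul_eq_smul {K M : Type*} [Field K] [CharZero K]
    [AddCommGroup M] [Module K M] [FiniteDimensional K M] {L A : Module.End K M} {c : K}
    (hc : c ≠ 0) (h : L * A - A * L = c • A) : IsNilpotent A := by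
  by_contra hA
  have hinj : Function.Injective fun k : ℕ => (k : K) * c := fun a b hab => by
    simpa [hc] using hab
  have hli : LinearIndependent K fun k : ℕ => A ^ k :=
    Module.End.eigenvectors_linearIndependent' (LinearMap.mulLeft K L - LinearMap.mulRight K L)
      _ hinj _ fun k => ⟨Module.End.mem_eigenspace_iff.mpr
        (mul_pow_sub_pow_mul_of_mul_sub_mul_eq_smul h k), fun hk => hA ⟨k, hk⟩⟩
  have := hli.finite
  exact not_finite ℕ

namespace LinearMap.BilinForm

variable {K M : Type*}

section CommRing

variable [CommRing K] [AddCommGroup M] [Module K M] {B θ : LinearMap.BilinForm K M}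
  {br : M → M → M} {D : Module.End K M}

theorem map_bracket_of_apply_eq_cocycle (hB : B.SeparatingLeft)
    (hbr : ∀ x y, br x y = -br y x) (hinv : ∀ x y z, B (br x y) z = B x (br y z))
    (hθ : θ.IsAlt) (hcocycle : ∀ x y z, θ (br x y) z + θ (br y z) x + θ (br z x) y = 0)
    (hD : ∀ x y, B (D x) y = θ x y) (x y : M) :
    D (br x y) = br (D x) y + br x (D y) := by
  rw [← sub_eq_zero]
  refine hB _ fun z => ?_
  have hleft : B (br (D x) y) z = -θ (br y z) x := by rw [hinv, hD, hθ.neg_eq]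
  have hright : B (br x (D y)) z = -θ (br z x) y := by
    rw [hbr, map_neg, LinearMap.neg_apply, hinv, hD, hbr x z, map_neg, hθ.neg_eq]
  rw [map_sub, map_add, LinearMap.sub_apply, LinearMap.add_apply, hleft, hright, hD]
  linear_combination hcocycle x y z

theorem apply_add_apply_eq_zero_of_apply_eq (hB : B.IsSymm) (hθ : θ.IsAlt)
    (hD : ∀ x y, B (D x) y = θ x y) (x y : M) : B (D x) y + B x (D y) = 0 := by
  rw [hB.eq x, hD, hD, ← hθ.neg_eq, neg_add_cancel]

end CommRing

theorem exists_apply_eq [Field K] [AddCommGroup M] [Module K M] [FiniteDimensional K M]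
    {B : LinearMap.BilinForm K M} (hB : B.Nondegenerate) (θ : LinearMap.BilinForm K M) :
    ∃ D : Module.End K M, ∀ x y, B (D x) y = θ x y :=
  ⟨(B.toDual hB).symm.toLinearMap ∘ₗ θ, fun _ _ => apply_toDual_symm_apply (hB := hB) _ _⟩

end LinearMap.BilinForm

def deBilinForm (Bv : V →ₗ[ℝ] V →ₗ[ℝ] ℝ) (Bh : H →ₗ[ℝ] H →ₗ[ℝ] ℝ) :
    LinearMap.BilinForm ℝ ((ℝ × V × ℝ) × H) :=
  LinearMap.mk₂ ℝ (deForm Bv Bh)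
    (fun _ _ _ => by
      simp only [deForm, Prod.fst_add, Prod.snd_add, map_add, LinearMap.add_apply]; ring)
    (fun _ _ _ => by
      simp only [deForm, Prod.smul_fst, Prod.smul_snd, map_smul, LinearMap.smul_apply,
        smul_eq_mul]; ring)
    (fun _ _ _ => by simp only [deForm, Prod.fst_add, Prod.snd_add, map_add]; ring)
    (fun _ _ _ => by simp only [deForm, Prod.smul_fst, Prod.smul_snd, map_smul, smul_eq_mul]; ring)

@[simp]
theorem deBilinForm_apply (Bv : V →ₗ[ℝ] V →ₗ[ℝ] ℝ) (Bh : H →ₗ[ℝ] H →ₗ[ℝ] ℝ)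
    (x y : (ℝ × V × ℝ) × H) : deBilinForm Bv Bh x y = deForm Bv Bh x y :=
  rfl

section

variable {Bv : V →ₗ[ℝ] V →ₗ[ℝ] ℝ} {Bh : H →ₗ[ℝ] H →ₗ[ℝ] ℝ} {A : V →ₗ[ℝ] V}

theorem deBilinForm_isSymm (hBvsymm : ∀ u v : V, Bv u v = Bv v u)
    (hBhsymm : ∀ u v : H, Bh u v = Bh v u) : (deBilinForm Bv Bh).IsSymm :=
  ⟨fun x y => by simp only [deBilinForm_apply, deForm, hBvsymm x.1.2.1, hBhsymm x.2]; ring⟩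

theorem deBilinForm_nondegenerate (hBvsymm : ∀ u v : V, Bv u v = Bv v u)
    (hBvnd : ∀ u : V, (∀ v : V, Bv u v = 0) → u = 0) (hBhsymm : ∀ u v : H, Bh u v = Bh v u)
    (hBhnd : ∀ u : H, (∀ v : H, Bh u v = 0) → u = 0) : (deBilinForm Bv Bh).Nondegenerate := by
  refine (deBilinForm_isSymm hBvsymm hBhsymm).isRefl.nondegenerate_iff_separatingLeft.mpr ?_
  rintro ⟨⟨x, u, x'⟩, h⟩ hz
  have hx : x = 0 := by simpa [deForm] using hz ((0, 0, 1), 0)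
  have hx' : x' = 0 := by simpa [deForm] using hz ((1, 0, 0), 0)
  have hu : u = 0 := hBvnd u fun v => by simpa [deForm] using hz ((0, v, 0), 0)
  have hh : h = 0 := hBhnd h fun k => by simpa [deForm] using hz ((0, 0, 0), k)
  simp [hx, hx', hu, hh]

omit [Module ℝ H] in
theorem deBracket_antisymm (hBvsymm : ∀ u v : V, Bv u v = Bv v u)
    (hAskew : ∀ u v : V, Bv (A u) v + Bv u (A v) = 0) (x y : (ℝ × V × ℝ) × H) :
    deBracket Bv A x y = -deBracket Bv A y x := by
  have h := hAskew x.1.2.1 y.1.2.1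
  rw [hBvsymm x.1.2.1] at h
  simp only [deBracket, Prod.neg_mk, neg_zero, neg_sub, Prod.mk.injEq, and_true]
  linarith

theorem deForm_deBracket (hAskew : ∀ u v : V, Bv (A u) v + Bv u (A v) = 0)
    (x y z : (ℝ × V × ℝ) × H) :
    deForm Bv Bh (deBracket Bv A x y) z = deForm Bv Bh x (deBracket Bv A y z) := by
  simp only [deForm, deBracket, map_sub, map_smul, LinearMap.sub_apply, LinearMap.smul_apply,
    smul_eq_mul, map_zero, LinearMap.zero_apply]
  linear_combination z.1.2.2 * hAskew x.1.2.1 y.1.2.1 - y.1.2.2 * hAskew x.1.2.1 z.1.2.1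

def deBlock (D : Module.End ℝ ((ℝ × V × ℝ) × H)) : Module.End ℝ V :=
  (LinearMap.fst ℝ V ℝ ∘ₗ LinearMap.snd ℝ ℝ (V × ℝ) ∘ₗ LinearMap.fst ℝ (ℝ × V × ℝ) H) ∘ₗ D ∘ₗ
    (LinearMap.inl ℝ (ℝ × V × ℝ) H ∘ₗ LinearMap.inr ℝ ℝ (V × ℝ) ∘ₗ LinearMap.inl ℝ V ℝ)

@[simp]
theorem deBlock_apply (D : Module.End ℝ ((ℝ × V × ℝ) × H)) (v : V) :
    deBlock D v = (D ((0, v, 0), 0)).1.2.1 :=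
  rfl

def IsDeDerivation (Bv : V →ₗ[ℝ] V →ₗ[ℝ] ℝ) (A : V →ₗ[ℝ] V)
    (D : Module.End ℝ ((ℝ × V × ℝ) × H)) : Prop :=
  ∀ x y, D (deBracket Bv A x y) = deBracket Bv A (D x) y + deBracket Bv A x (D y)

def IsDeSkew (Bv : V →ₗ[ℝ] V →ₗ[ℝ] ℝ) (Bh : H →ₗ[ℝ] H →ₗ[ℝ] ℝ)
    (D : Module.End ℝ ((ℝ × V × ℝ) × H)) : Prop :=
  ∀ x y, deForm Bv Bh (D x) y + deForm Bv Bh x (D y) = 0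

variable {D : Module.End ℝ ((ℝ × V × ℝ) × H)}

namespace IsDeDerivation

theorem map_apply_e (hD : IsDeDerivation Bv A D) : A (D ((1, 0, 0), 0)).1.2.1 = 0 := by
  have h := congrArg (fun z => z.1.2.1) (hD ((1, 0, 0), 0) ((0, 0, 1), 0))
  have h0 : D ((0, 0, 0), 0) = 0 := map_zero D
  simpa [deBracket, h0] using h.symm

theorem smul_apply_e (hD : IsDeDerivation Bv A D) (u v : V) :
    Bv (A u) v • D ((1, 0, 0), 0) =
      deBracket Bv A (D ((0, u, 0), 0)) ((0, v, 0), 0) +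
        deBracket Bv A ((0, u, 0), 0) (D ((0, v, 0), 0)) := by
  rw [← hD, ← map_smul]
  congr 1
  simp [deBracket]

theorem deBlock_mul_sub_mul (hD : IsDeDerivation Bv A D) :
    deBlock D * A - A * deBlock D = (D ((0, 0, 1), 0)).1.2.2 • A := by
  ext v
  have h := congrArg (fun z => z.1.2.1) (hD ((0, 0, 1), 0) ((0, v, 0), 0))
  simp only [deBracket, map_zero, LinearMap.zero_apply, one_smul, smul_zero, sub_zero, zero_smul,
    Prod.mk_add_mk, add_zero] at h
  simp [h]

end IsDeDerivation

namespace IsDeSkew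

theorem apply_e_snd_snd (hS : IsDeSkew Bv Bh D) : (D ((1, 0, 0), 0)).1.2.2 = 0 := by
  simpa [deForm] using hS ((1, 0, 0), 0) ((1, 0, 0), 0)

theorem apply_e_fst (hS : IsDeSkew Bv Bh D) :
    (D ((1, 0, 0), 0)).1.1 = -(D ((0, 0, 1), 0)).1.2.2 := by
  have h := hS ((1, 0, 0), 0) ((0, 0, 1), 0)
  simp only [deForm, map_zero, LinearMap.zero_apply] at h
  linarith

theorem apply_g_snd_snd (hS : IsDeSkew Bv Bh D) (u : V) :
    (D ((0, u, 0), 0)).1.2.2 = -Bv u (D ((1, 0, 0), 0)).1.2.1 := by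
  have h := hS ((0, u, 0), 0) ((1, 0, 0), 0)
  simp only [deForm, map_zero, LinearMap.zero_apply] at h
  linarith

end IsDeSkew

theorem pow_three_eq_zero_of_smul_eq (hBvsymm : ∀ u v : V, Bv u v = Bv v u)
    (hBvnd : ∀ u : V, (∀ v : V, Bv u v = 0) → u = 0)
    (hAskew : ∀ u v : V, Bv (A u) v + Bv u (A v) = 0) {u₀ : V} (hu₀ : u₀ ≠ 0) (hAu₀ : A u₀ = 0)
    (h : ∀ u v, Bv (A u) v • u₀ = Bv v u₀ • A u - Bv u u₀ • A v) : A ^ 3 = 0 := by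
  obtain ⟨v₁, hv₁⟩ : ∃ v, Bv v u₀ ≠ 0 := by
    by_contra! hv
    exact hu₀ (hBvnd u₀ fun v => hBvsymm u₀ v ▸ hv v)
  ext w
  -- apply `A` to `h (A w) v₁`: the left side dies as `A u₀ = 0`, and `⟨A w, u₀⟩ = -⟨w, A u₀⟩ = 0`,
  -- leaving `⟨v₁, u₀⟩ • A³ w = 0`
  have hw : Bv (A w) u₀ = 0 := by simpa [hAu₀] using hAskew w u₀
  have hA3 := congrArg A (h (A w) v₁)
  simp only [map_smul, hAu₀, smul_zero, hw, zero_smul, sub_zero] at hA3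
  simpa [pow_succ, hv₁] using hA3.symm

theorem IsDeDerivation.apply_e_eq_zero [FiniteDimensional ℝ V]
    (hBvsymm : ∀ u v : V, Bv u v = Bv v u) (hBvnd : ∀ u : V, (∀ v : V, Bv u v = 0) → u = 0)
    (hAskew : ∀ u v : V, Bv (A u) v + Bv u (A v) = 0) (hA : ¬IsNilpotent A)
    (hD : IsDeDerivation Bv A D) (hS : IsDeSkew Bv Bh D) : D ((1, 0, 0), 0) = 0 := by
  obtain ⟨u, v, huv⟩ : ∃ u v, Bv (A u) v ≠ 0 := by
    by_contra! h
    exact hA ⟨1, LinearMap.ext fun u => by simpa using hBvnd _ (h u)⟩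
  have hV : ∀ u v, Bv (A u) v • (D ((1, 0, 0), 0)).1.2.1 =
      Bv v (D ((1, 0, 0), 0)).1.2.1 • A u - Bv u (D ((1, 0, 0), 0)).1.2.1 • A v := by
    intro u v
    have h := congrArg (fun z => z.1.2.1) (hD.smul_apply_e u v)
    simp only [Prod.smul_fst, Prod.smul_snd, deBracket, hS.apply_g_snd_snd, neg_smul, zero_smul,
      sub_zero, sub_neg_eq_add, zero_add, Prod.mk_add_mk, add_zero] at h
    rw [h, add_comm, sub_eq_add_neg]
  have hg : (D ((1, 0, 0), 0)).1.2.1 = 0 := by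
    by_contra hg
    exact hA ⟨3, pow_three_eq_zero_of_smul_eq hBvsymm hBvnd hAskew hg hD.map_apply_e hV⟩
  have hh : (D ((1, 0, 0), 0)).2 = 0 := by
    have h := congrArg Prod.snd (hD.smul_apply_e u v)
    simp only [Prod.smul_snd, Prod.snd_add, deBracket, add_zero, smul_eq_zero] at h
    exact h.resolve_left huv
  have hc : (D ((0, 0, 1), 0)).1.2.2 = 0 := by
    by_contra hc
    exact hA (Module.End.isNilpotent_of_mul_sub_mul_eq_smul hc hD.deBlock_mul_sub_mul)
  exact Prod.ext (Prod.ext (by rw [hS.apply_e_fst, hc, neg_zero]; rfl)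
    (Prod.ext hg hS.apply_e_snd_snd)) hh

theorem deCocycle_apply_e_eq_zero [FiniteDimensional ℝ V] [FiniteDimensional ℝ H]
    (hBvsymm : ∀ u v : V, Bv u v = Bv v u) (hBvnd : ∀ u : V, (∀ v : V, Bv u v = 0) → u = 0)
    (hBhsymm : ∀ u v : H, Bh u v = Bh v u) (hBhnd : ∀ u : H, (∀ v : H, Bh u v = 0) → u = 0)
    (hAskew : ∀ u v : V, Bv (A u) v + Bv u (A v) = 0) (hA : ¬IsNilpotent A)
    {θ : LinearMap.BilinForm ℝ ((ℝ × V × ℝ) × H)} (hθ : θ.IsAlt)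
    (hcocycle : ∀ x y z, θ (deBracket Bv A x y) z + θ (deBracket Bv A y z) x +
      θ (deBracket Bv A z x) y = 0) (y : (ℝ × V × ℝ) × H) :
    θ ((1, 0, 0), 0) y = 0 := by
  have hB := deBilinForm_nondegenerate hBvsymm hBvnd hBhsymm hBhnd
  obtain ⟨D, hD⟩ := LinearMap.BilinForm.exists_apply_eq hB θ
  have hDer : IsDeDerivation Bv A D :=
    LinearMap.BilinForm.map_bracket_of_apply_eq_cocycle hB.1 (deBracket_antisymm hBvsymm hAskew)
      (deForm_deBracket hAskew) hθ hcocycle hD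
  have hSkew : IsDeSkew Bv Bh D :=
    LinearMap.BilinForm.apply_add_apply_eq_zero_of_apply_eq
      (deBilinForm_isSymm hBvsymm hBhsymm) hθ hD
  rw [← hD, hDer.apply_e_eq_zero hBvsymm hBvnd hAskew hA hSkew, map_zero, LinearMap.zero_apply]

end

/-- Every derivation of `δ_A(g) × h` (with `g, h` abelian quadratic and `A` skew-symmetric
and not nilpotent) which is skew-symmetric with respect to the product metric kills the
central element `e`.  In particular `δ_A(g) × h` carries no `k`-symplectic structure for
any `k ≥ 1`. -/
theorem double_extension_no_ksymplectic
    [FiniteDimensional ℝ V] [FiniteDimensional ℝ H]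
    (Bv : V →ₗ[ℝ] V →ₗ[ℝ] ℝ)
    (hBvsymm : ∀ u v : V, Bv u v = Bv v u)
    (hBvnd : ∀ u : V, (∀ v : V, Bv u v = 0) → u = 0)
    (Bh : H →ₗ[ℝ] H →ₗ[ℝ] ℝ)
    (hBhsymm : ∀ u v : H, Bh u v = Bh v u)
    (hBhnd : ∀ u : H, (∀ v : H, Bh u v = 0) → u = 0)
    (A : V →ₗ[ℝ] V)
    (hAskew : ∀ u v : V, Bv (A u) v + Bv u (A v) = 0)
    (hAnotnilp : ¬ IsNilpotent A) :
    (∀ D : ((ℝ × V × ℝ) × H) →ₗ[ℝ] ((ℝ × V × ℝ) × H),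
        (∀ x y, D (deBracket Bv A x y) =
          deBracket Bv A (D x) y + deBracket Bv A x (D y)) →
        (∀ x y, deForm Bv Bh (D x) y + deForm Bv Bh x (D y) = 0) →
        D ((1, 0, 0), 0) = 0) ∧
    (∀ (n k : ℕ), 1 ≤ k →
      ∀ (W : Submodule ℝ ((ℝ × V × ℝ) × H)),
        (∀ x ∈ W, ∀ y ∈ W, deBracket Bv A x y ∈ W) →
        Module.finrank ℝ ((ℝ × V × ℝ) × H) = n * (k + 1) →
        Module.finrank ℝ W = n * k →
        ∀ θ : Fin k → (((ℝ × V × ℝ) × H) →ₗ[ℝ] ((ℝ × V × ℝ) × H) →ₗ[ℝ] ℝ),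
          (∀ i, ∀ x, θ i x x = 0) →
          (∀ i, ∀ x y z, θ i (deBracket Bv A x y) z + θ i (deBracket Bv A y z) x +
            θ i (deBracket Bv A z x) y = 0) →
          (∀ x, (∀ i, ∀ y, θ i x y = 0) → x = 0) →
          (∀ i, ∀ x ∈ W, ∀ y ∈ W, θ i x y = 0) →
          False) := by
  refine ⟨fun D hD hS => IsDeDerivation.apply_e_eq_zero hBvsymm hBvnd hAskew hAnotnilp hD hS, ?_⟩
  intro _ _ _ _ _ _ _ θ hθ hcocycle hnd _
  have he := hnd _ fun i => deCocycle_apply_e_eq_zero hBvsymm hBvnd hBhsymm hBhnd hAskew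
    hAnotnilp (hθ i) (hcocycle i)
  simp at he

end DoubleExtension
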